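/- Let G be a connected graph on [n] that has the interval property with respect to its labeling, let H = in_lex(G), and let M = {x_{i_1}, y_{j_1}}, …, {x_{i_m}, y_{j_m}} be an induced matching of H with i_1 < ⋯ < i_m satisfying condition (∗) and with m = indmatch(H). Then the sequence i_1, i_2, …, i_m, j_m is an induced path of G of length m. -/

import Mathlib

open SimpleGraph

/-- `G` has the interval property with respect to its labeling: for every edge `{i,j}`
with `i < j`, every pair `{k,l}` with `i ≤ k < l ≤ j` is an edge of `G`. -/
def HasIntervalProperty {n : ℕ} (G : SimpleGraph (Fin n)) : Prop :=
  ∀ i j k l : Fin n, G.Adj i j → i < j → i ≤ k → k < l → l ≤ j → G.Adj k l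

/-- The bipartite graph `in_lex(G)` on `{x_1,…,x_n} ∪ {y_1,…,y_n}` (here `Sum.inl i = x_i`,
`Sum.inr j = y_j`) whose edges are the pairs `{x_i, y_j}` with `i < j` and `{i,j} ∈ E(G)`. -/
def inLex {n : ℕ} (G : SimpleGraph (Fin n)) : SimpleGraph (Fin n ⊕ Fin n) :=
  SimpleGraph.fromRel (fun u v =>
    ∃ i j : Fin n, i < j ∧ G.Adj i j ∧ u = Sum.inl i ∧ v = Sum.inr j)

/-- `M` is an induced matching of `H`: a set of edges of `H`, pairwise vertex-disjoint,
such that no edge of `H` joins two vertices lying in distinct edges of `M`. -/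
def IsInducedMatching {V : Type*} (H : SimpleGraph V) (M : Set (Sym2 V)) : Prop :=
  M ⊆ H.edgeSet ∧
  (∀ e ∈ M, ∀ f ∈ M, e ≠ f → ∀ v, v ∈ e → v ∉ f) ∧
  (∀ e ∈ M, ∀ f ∈ M, e ≠ f → ∀ u ∈ e, ∀ v ∈ f, ¬ H.Adj u v)

/-- An indexed family of `m` pairwise distinct edges forming an induced matching of `H`. -/
def IsInducedMatchingFamily {V : Type*} (H : SimpleGraph V) {m : ℕ} (f : Fin m → Sym2 V) : Prop :=
  Function.Injective f ∧ IsInducedMatching H (Set.range f)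

/-- `p` is an induced path of length `l` in `G`: `l+1` distinct vertices such that the edges
of `G` among them are exactly the consecutive pairs. -/
def IsInducedPath {V : Type*} (G : SimpleGraph V) (l : ℕ) (p : Fin (l + 1) → V) : Prop :=
  Function.Injective p ∧
  ∀ a b : Fin (l + 1), G.Adj (p a) (p b) ↔ ((a : ℕ) + 1 = b ∨ (b : ℕ) + 1 = a)

/-- `c` is an induced cycle of length `k` in `H`: `k` distinct vertices such that the edges
of `H` among them are exactly the consecutive pairs (cyclically). -/
def IsInducedCycle {V : Type*} (H : SimpleGraph V) (k : ℕ) (c : Fin k → V) : Prop :=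
  3 ≤ k ∧ Function.Injective c ∧
  ∀ a b : Fin k, H.Adj (c a) (c b) ↔ (((a : ℕ) + 1) % k = b ∨ ((b : ℕ) + 1) % k = a)

/-- Condition (∗) for an induced matching `{x_{i t}, y_{j t}}` of `in_lex(G)`: for every
index `a` and vertex `t < i a` with `{t, j a} ∈ E(G)`, replacing `x_{i a}` by `x_t`
does not yield an induced matching of `in_lex(G)`. -/
def CondStar {n m : ℕ} (G : SimpleGraph (Fin n)) (i j : Fin m → Fin n) : Prop :=
  ∀ a : Fin m, ∀ t : Fin n, t < i a → G.Adj t (j a) →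
    ¬ IsInducedMatchingFamily (inLex G)
        (fun u => if u = a then s(Sum.inl t, Sum.inr (j u))
                  else s(Sum.inl (i u), Sum.inr (j u)))

/-!
The matching interleaves: the interval property forces `i_s < j_s ≤ i_{s+1}`, and `x_{i_s}`
sees no `y_{j_t}` with `t ≠ s`. A chord `i_s ~ i_t` (`t ≥ s + 2`) or `i_s ~ j_m` (`s < m`)
would span some `j_{t-1}`, hence give `i_s ~ j_{t-1}`; so the sequence has no chords. For
`i_s ~ i_{s+1}`, let `r` be the largest neighbour of `i_s`; if `r < i_{s+1}`, then either
`r ~ j_{s+1}` and `r` may replace `i_{s+1}`, against (∗), or `{x_r, y_{r+1}}` extends the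
matching (connectivity and the interval property make every `k ~ k + 1` an edge), against
the maximality of `m`.
-/

open Function Sum

section InLex

variable {n : ℕ} {G : SimpleGraph (Fin n)}

@[simp]
lemma inLex_adj_inl_inr {a b : Fin n} : (inLex G).Adj (inl a) (inr b) ↔ a < b ∧ G.Adj a b := by
  simp [inLex, fromRel_adj]

@[simp]
lemma inLex_not_adj_inl_inl (a b : Fin n) : ¬ (inLex G).Adj (inl a) (inl b) := by
  simp [inLex, fromRel_adj]

@[simp]
lemma inLex_not_adj_inr_inr (a b : Fin n) : ¬ (inLex G).Adj (inr a) (inr b) := by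
  simp [inLex, fromRel_adj]

end InLex

lemma HasIntervalProperty.adj_of_val_eq_succ {n : ℕ} {G : SimpleGraph (Fin n)}
    (hG : HasIntervalProperty G) (hconn : G.Preconnected) {k l : Fin n} (hkl : (l : ℕ) = k + 1) :
    G.Adj k l := by
  obtain ⟨w⟩ := hconn k l
  obtain ⟨d, -, hd, hd'⟩ := w.exists_boundary_dart (Set.Iic k) Set.self_mem_Iic
    (by simp [Fin.le_iff_val_le_val, hkl])
  simp only [Set.mem_Iic, not_le] at hd hd'
  exact hG _ _ _ _ d.adj (hd.trans_lt hd') hd (by omega) (by omega)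

/-- The sizes of induced matchings of `H`; `indmatch H` is its maximum. -/
def inducedMatchingSizes {V : Type*} (H : SimpleGraph V) : Set ℕ :=
  {k | ∃ M : Set (Sym2 V), IsInducedMatching H M ∧ M.ncard = k}

/-- The edges `{x_{X u}, y_{Y u}}` form an induced matching of `inLex G`, read off in `G`. -/
structure IsLexMatching {n m : ℕ} (G : SimpleGraph (Fin n)) (X Y : Fin m → Fin n) : Prop where
  injective_left : Injective X
  injective_right : Injective Y
  lt (u : Fin m) : X u < Y u
  adj (u : Fin m) : G.Adj (X u) (Y u)
  not_adj {u v : Fin m} : u ≠ v → X u < Y v → ¬ G.Adj (X u) (Y v)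

section LexMatching

variable {n m : ℕ} {G : SimpleGraph (Fin n)} {X Y : Fin m → Fin n}

lemma isInducedMatchingFamily_inLex_iff :
    IsInducedMatchingFamily (inLex G) (fun u => s(inl (X u), inr (Y u))) ↔
      IsLexMatching G X Y := by
  constructor
  · rintro ⟨hinj, hsub, hdisj, hind⟩
    have hne {u v : Fin m} (h : u ≠ v) : s(inl (X u), inr (Y u)) ≠ s(inl (X v), inr (Y v)) :=
      fun he => h (hinj he)
    refine ⟨fun u v h => ?_, fun u v h => ?_, fun u => ?_, fun u => ?_,
      fun {u v} h hlt hadj => ?_⟩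
    · by_contra huv
      exact hdisj _ ⟨u, rfl⟩ _ ⟨v, rfl⟩ (hne huv) (inl (X u)) (by simp) (by simp [h])
    · by_contra huv
      exact hdisj _ ⟨u, rfl⟩ _ ⟨v, rfl⟩ (hne huv) (inr (Y u)) (by simp) (by simp [h])
    · exact (inLex_adj_inl_inr.1 (hsub ⟨u, rfl⟩)).1
    · exact (inLex_adj_inl_inr.1 (hsub ⟨u, rfl⟩)).2
    · exact hind _ ⟨u, rfl⟩ _ ⟨v, rfl⟩ (hne h) _ (by simp) _ (by simp)
        (inLex_adj_inl_inr.2 ⟨hlt, hadj⟩)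
  · intro h
    refine ⟨fun u v huv => h.injective_right
      (inr_injective ((Sym2.eq_iff.1 huv).resolve_right (by simp)).2), ?_, ?_, ?_⟩
    · rintro _ ⟨u, rfl⟩
      exact inLex_adj_inl_inr.2 ⟨h.lt u, h.adj u⟩
    · rintro _ ⟨u, rfl⟩ _ ⟨v, rfl⟩ huv w hu hv
      have huv : u ≠ v := fun e => huv (e ▸ rfl)
      simp only [Sym2.mem_iff] at hu hv
      rcases hu with rfl | rfl <;> rcases hv with hv | hv <;> simp only [inl.injEq,
        inr.injEq, reduceCtorEq] at hv
      exacts [huv (h.injective_left hv), huv (h.injective_right hv)]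
    · rintro _ ⟨u, rfl⟩ _ ⟨v, rfl⟩ huv a ha b hb hab
      have huv : u ≠ v := fun e => huv (e ▸ rfl)
      simp only [Sym2.mem_iff] at ha hb
      rcases ha with rfl | rfl <;> rcases hb with rfl | rfl
      · exact inLex_not_adj_inl_inl _ _ hab
      · exact h.not_adj huv (inLex_adj_inl_inr.1 hab).1 (inLex_adj_inl_inr.1 hab).2
      · rw [adj_comm] at hab
        exact h.not_adj huv.symm (inLex_adj_inl_inr.1 hab).1 (inLex_adj_inl_inr.1 hab).2
      · exact inLex_not_adj_inr_inr _ _ hab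

namespace IsLexMatching

lemma card_le {k : ℕ} {X' Y' : Fin k → Fin n}
    (hm : m ∈ upperBounds (inducedMatchingSizes (inLex G)))
    (h : IsLexMatching G X' Y') : k ≤ m := by
  obtain ⟨hinj, hM⟩ := isInducedMatchingFamily_inLex_iff.2 h
  simpa [Set.ncard_range_of_injective hinj] using hm ⟨_, hM, rfl⟩

lemma right_le_left (hG : HasIntervalProperty G) (hX : StrictMono X) (h : IsLexMatching G X Y)
    {u v : Fin m} (huv : u < v) : Y u ≤ X v := by
  by_contra! hlt
  exact h.not_adj huv.ne' hlt (hG _ _ _ _ (h.adj u) (h.lt u) (hX huv).le hlt le_rfl)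

lemma strictMono_right (hG : HasIntervalProperty G) (hX : StrictMono X) (h : IsLexMatching G X Y) :
    StrictMono Y :=
  fun _ v huv => (h.right_le_left hG hX huv).trans_lt (h.lt v)

lemma not_adj_left_of_right_le (hG : HasIntervalProperty G) (hX : StrictMono X)
    (h : IsLexMatching G X Y) {u v : Fin m} (huv : u < v) {x : Fin n} (hx : Y v ≤ x) :
    ¬ G.Adj (X u) x := fun hadj =>
  have hlt : X u < Y v := (h.lt u).trans (h.strictMono_right hG hX huv)
  h.not_adj huv.ne hlt (hG _ _ _ _ hadj (hlt.trans_le hx) le_rfl hlt hx)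

lemma update_left {t : Fin m} {x : Fin n} (h : IsLexMatching G X Y)
    (hx : ∀ u, u ≠ t → X u ≠ x) (hlt : x < Y t) (hadj : G.Adj x (Y t))
    (hnadj : ∀ v, v ≠ t → x < Y v → ¬ G.Adj x (Y v)) :
    IsLexMatching G (Function.update X t x) Y := by
  refine ⟨fun u v huv => ?_, h.injective_right, fun u => ?_, fun u => ?_, fun {u v} huv => ?_⟩
  · simp only [Function.update_apply] at huv
    split_ifs at huv with hu hv hv
    · exact hu.trans hv.symm
    · exact absurd huv.symm (hx v hv)
    · exact absurd huv (hx u hu)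
    · exact h.injective_left huv
  · rcases eq_or_ne u t with rfl | hu
    · simpa using hlt
    · simpa [hu] using h.lt u
  · rcases eq_or_ne u t with rfl | hu
    · simpa using hadj
    · simpa [hu] using h.adj u
  · rcases eq_or_ne u t with rfl | hu
    · simpa using hnadj v huv.symm
    · simpa [hu] using h.not_adj huv

lemma cons {x y : Fin n} (h : IsLexMatching G X Y) (hx : x ∉ Set.range X)
    (hy : y ∉ Set.range Y) (hlt : x < y) (hadj : G.Adj x y)
    (hl : ∀ v, x < Y v → ¬ G.Adj x (Y v)) (hr : ∀ u, X u < y → ¬ G.Adj (X u) y) :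
    IsLexMatching G (Fin.cons x X : Fin (m + 1) → Fin n) (Fin.cons y Y) := by
  refine ⟨Fin.cons_injective_iff.2 ⟨hx, h.injective_left⟩,
    Fin.cons_injective_iff.2 ⟨hy, h.injective_right⟩, fun u => ?_, fun u => ?_,
    fun {u v} huv => ?_⟩
  · cases u using Fin.cases <;> simp [hlt, h.lt]
  · cases u using Fin.cases <;> simp [hadj, h.adj]
  · cases u using Fin.cases <;> cases v using Fin.cases
    · exact absurd rfl huv
    · simpa using hl _
    · simpa using hr _
    · simpa using h.not_adj (by simpa using huv)

section Consecutive

variable {s t : Fin m} {r : Fin n}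

lemma left_ne_of_between (hX : StrictMono X) (h : IsLexMatching G X Y) (hst : (t : ℕ) = s + 1)
    (hsr : Y s ≤ r) (hrt : r < X t) (u : Fin m) : X u ≠ r := by
  rcases le_or_gt u s with hu | hu
  · exact ((hX.monotone hu).trans_lt ((h.lt s).trans_le hsr)).ne
  · exact (hrt.trans_le (hX.monotone (show t ≤ u by omega))).ne'

lemma not_adj_of_between (hG : HasIntervalProperty G) (hX : StrictMono X)
    (h : IsLexMatching G X Y) (hst : (t : ℕ) = s + 1) (hsr : Y s ≤ r) (hrt : r < X t)
    {v : Fin m} (hvt : v ≠ t) (hrv : r < Y v) : ¬ G.Adj r (Y v) := by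
  intro hadj
  rcases le_or_gt v s with hv | hv
  · exact (((h.strictMono_right hG hX).monotone hv).trans hsr).not_gt hrv
  · have htv : X t < Y v :=
      (h.lt t).trans (h.strictMono_right hG hX (lt_of_le_of_ne (by omega) hvt.symm))
    exact h.not_adj hvt.symm htv (hG _ _ _ _ hadj hrv hrt.le htv le_rfl)

lemma update_left_of_between (hG : HasIntervalProperty G) (hX : StrictMono X)
    (h : IsLexMatching G X Y) (hst : (t : ℕ) = s + 1) (hsr : Y s ≤ r) (hrt : r < X t)
    (hadj : G.Adj r (Y t)) : IsLexMatching G (Function.update X t r) Y :=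
  h.update_left (fun u _ => h.left_ne_of_between hX hst hsr hrt u) (hrt.trans (h.lt t)) hadj
    fun _ hvt => h.not_adj_of_between hG hX hst hsr hrt hvt

lemma cons_of_between (hG : HasIntervalProperty G) (hconn : G.Preconnected) (hX : StrictMono X)
    (h : IsLexMatching G X Y) (hst : (t : ℕ) = s + 1) (hrmax : ∀ l, G.Adj (X s) l → l ≤ r)
    (hrt : r < X t) (hrYt : ¬ G.Adj r (Y t)) {r' : Fin n} (hr' : (r' : ℕ) = r + 1) :
    IsLexMatching G (Fin.cons r X : Fin (m + 1) → Fin n) (Fin.cons r' Y) := by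
  have hsr : Y s ≤ r := hrmax _ (h.adj s)
  refine h.cons (by simpa using h.left_ne_of_between hX hst hsr hrt) ?_ (by omega)
    (hG.adj_of_val_eq_succ hconn hr') (fun v hrv => ?_) (fun u hu hadj => ?_)
  · rintro ⟨v, hv⟩
    rcases le_or_gt v s with hvs | hsv
    · have := ((h.strictMono_right hG hX).monotone hvs).trans hsr
      omega
    · have := (hX.monotone (show t ≤ v by omega)).trans_lt (h.lt v)
      omega
  · rcases eq_or_ne v t with rfl | hvt
    · exact hrYt
    · exact h.not_adj_of_between hG hX hst hsr hrt hvt hrv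
  · rcases lt_trichotomy u s with hus | rfl | hsu
    · exact h.not_adj_left_of_right_le hG hX hus (by omega) hadj
    · exact absurd (hrmax _ hadj) (by omega)
    · have := hX.monotone (show t ≤ u by omega)
      omega

lemma adj_left_of_val_eq_succ (hG : HasIntervalProperty G) (hconn : G.Preconnected)
    (hX : StrictMono X) (h : IsLexMatching G X Y) (hstar : CondStar G X Y)
    (hm : m ∈ upperBounds (inducedMatchingSizes (inLex G))) (hst : (t : ℕ) = s + 1) :
    G.Adj (X s) (X t) := by
  classical
  obtain ⟨r, hr, hrmax⟩ :=
    (Finset.univ.filter (G.Adj (X s))).exists_max_image id ⟨Y s, by simp [h.adj s]⟩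
  simp only [Finset.mem_filter, Finset.mem_univ, true_and, id] at hr hrmax
  have hsr : Y s ≤ r := hrmax _ (h.adj s)
  rcases le_or_gt (X t) r with htr | hrt
  · exact hG _ _ _ _ hr ((h.lt s).trans_le hsr) le_rfl (hX (by omega)) htr
  have hrYt : ¬ G.Adj r (Y t) := fun hadj => hstar t r hrt hadj <| by
    convert isInducedMatchingFamily_inLex_iff.2
      (h.update_left_of_between hG hX hst hsr hrt hadj) using 2 with u
    split_ifs with hu <;> simp [hu]
  obtain ⟨r', hr'⟩ : ∃ r' : Fin n, (r' : ℕ) = r + 1 := ⟨⟨r + 1, by omega⟩, rfl⟩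
  have := (h.cons_of_between hG hconn hX hst hrmax hrt hrYt hr').card_le hm
  omega

end Consecutive

lemma adj_left_right_iff (hG : HasIntervalProperty G) (hX : StrictMono X)
    (h : IsLexMatching G X Y) {u v : Fin m} (huv : u ≤ v) : G.Adj (X u) (Y v) ↔ u = v := by
  refine ⟨fun hadj => by_contra fun hne => h.not_adj hne ?_ hadj, fun huv => huv ▸ h.adj u⟩
  exact (h.lt u).trans_le ((h.strictMono_right hG hX).monotone huv)

lemma adj_left_left_iff (hG : HasIntervalProperty G) (hconn : G.Preconnected)
    (hX : StrictMono X) (h : IsLexMatching G X Y) (hstar : CondStar G X Y)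
    (hm : m ∈ upperBounds (inducedMatchingSizes (inLex G))) {u v : Fin m} (huv : u < v) :
    G.Adj (X u) (X v) ↔ (u : ℕ) + 1 = v := by
  refine ⟨fun hadj => by_contra fun hne => ?_,
    fun h' => h.adj_left_of_val_eq_succ hG hconn hX hstar hm h'.symm⟩
  obtain ⟨w, hw⟩ : ∃ w : Fin m, (w : ℕ) = v - 1 := ⟨⟨v - 1, by omega⟩, rfl⟩
  exact h.not_adj_left_of_right_le hG hX (show u < w by omega)
    (h.right_le_left hG hX (show w < v by omega)) hadj

end IsLexMatching

end LexMatching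

lemma isInducedPath_of_adj_iff {V : Type*} {G : SimpleGraph V} {l : ℕ} {p : Fin (l + 1) → V}
    (hp : Injective p) (h : ∀ a b, a < b → (G.Adj (p a) (p b) ↔ (a : ℕ) + 1 = b)) :
    IsInducedPath G l p := by
  refine ⟨hp, fun a b => ?_⟩
  rcases lt_trichotomy a b with hab | rfl | hab
  · rw [h a b hab]
    omega
  · simp
  · rw [G.adj_comm, h b a hab]
    omega

/-- If `G` is connected with the interval property and `{x_{i_1}, y_{j_1}}, …,
{x_{i_m}, y_{j_m}}` is an induced matching of `in_lex(G)` with `i_1 < ⋯ < i_m` satisfying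
(∗) and `m = indmatch(in_lex(G))`, then `i_1, …, i_m, j_m` is an induced path of `G` of
length `m`. -/
theorem stmt_13 {n m : ℕ} (G : SimpleGraph (Fin n)) (hconn : G.Connected)
    (hG : HasIntervalProperty G) (hm1 : 1 ≤ m)
    (i j : Fin m → Fin n) (hmono : StrictMono i)
    (hM : IsInducedMatchingFamily (inLex G)
      (fun t => s(Sum.inl (i t), Sum.inr (j t))))
    (hstar : CondStar G i j)
    (hm : IsGreatest {k : ℕ | ∃ M : Set (Sym2 (Fin n ⊕ Fin n)),
            IsInducedMatching (inLex G) M ∧ M.ncard = k} m) :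
    IsInducedPath G m (Fin.snoc i (j ⟨m - 1, by omega⟩)) := by
  have hL := isInducedMatchingFamily_inLex_iff.1 hM
  set ℓ : Fin m := ⟨m - 1, by omega⟩
  have hle_ℓ : ∀ a : Fin m, a ≤ ℓ := fun a => Fin.le_def.2 (by simp only [ℓ]; omega)
  have hsnoc : StrictMono (Fin.snoc i (j ℓ) : Fin (m + 1) → Fin n) := by
    intro a b hab
    obtain ⟨a, rfl⟩ := Fin.exists_castSucc_eq.2 (hab.trans_le (Fin.le_last b)).ne
    induction b using Fin.lastCases with
    | last => simpa using (hmono.monotone (hle_ℓ a)).trans_lt (hL.lt ℓ)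
    | cast b => simpa using hmono hab
  refine isInducedPath_of_adj_iff hsnoc.injective fun a b hab => ?_
  obtain ⟨a, rfl⟩ := Fin.exists_castSucc_eq.2 (hab.trans_le (Fin.le_last b)).ne
  induction b using Fin.lastCases with
  | last =>
    simp only [Fin.snoc_castSucc, Fin.snoc_last, hL.adj_left_right_iff hG hmono (hle_ℓ a),
      Fin.ext_iff, Fin.val_castSucc, Fin.val_last, ℓ]
    omega
  | cast b =>
    simpa using hL.adj_left_left_iff hG hconn.preconnected hmono hstar hm.2 (by simpa using hab)
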